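/- arXiv:2504.08357 — 6 statements merged into one kernel-verified Lean document; each statement's English description precedes it below -/
import Mathlib

section
/- Let Γ be a discrete group and X a compact Hausdorff space with a continuous Γ-action. For f₁, f₂ ∈ A₀(Γ,X) (the space of unconditionally summable functions Γ → C(X) with norm ‖f‖ = ‖∑_g |f_g|‖_∞), the convolution f₁ * f₂ defined by (f₁ * f₂)(g) = ∑_{h∈Γ} f₁(h)·(f₂(h⁻¹g))^h satisfies ‖f₁ * f₂‖_{A₀} ≤ ‖f₁‖_{A₀}·‖f₂‖_{A₀}. In particular A₀(Γ,X) is a Banach algebra. -/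
/-! It suffices to bound the sum at each point `x`. Bounding each inner norm by the sum of norms
and swapping the two sums of the nonnegative double series, the `h`-th row becomes
`‖f₁ h x‖ · ∑_k ‖f₂ k (h⁻¹ • x)‖` because `g ↦ h⁻¹ * g` is a bijection of `Γ`; that inner sum
is at most the norm of `f₂`, and summing over `h` leaves at most the norm of `f₁`. -/

section TwistedConvolution

variable {Γ R : Type*} [Group Γ] [NormedRing R]

lemma tsum_const_mul_translate_eq (c : ℝ) (b : Γ → ℝ) (h : Γ) :
    ∑' g, c * b (h⁻¹ * g) = c * ∑' k, b k := by
  rw [tsum_mul_left]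
  exact congrArg (c * ·) ((Equiv.mulLeft h⁻¹).tsum_eq b)

lemma summable_norm_mul_translate {a : Γ → R} {b : Γ → Γ → R} {C : ℝ}
    (ha : Summable (‖a ·‖)) (hb : ∀ h, Summable (‖b h ·‖)) (hC : ∀ h, ∑' k, ‖b h k‖ ≤ C) :
    Summable fun p : Γ × Γ => ‖a p.1‖ * ‖b p.1 (p.1⁻¹ * p.2)‖ := by
  refine (summable_prod_of_nonneg fun _ => by positivity).2 ⟨fun h => ?_, ?_⟩
  · exact ((Equiv.mulLeft h⁻¹).summable_iff.2 (hb h)).mul_left ‖a h‖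
  · refine .of_nonneg_of_le (fun _ => by positivity) (fun h => ?_) (ha.mul_right C)
    rw [tsum_const_mul_translate_eq ‖a h‖ (‖b h ·‖) h]
    exact mul_le_mul_of_nonneg_left (hC h) (norm_nonneg _)

theorem tsum_norm_tsum_mul_translate_le {a : Γ → R} {b : Γ → Γ → R} {C : ℝ}
    (ha : Summable (‖a ·‖)) (hb : ∀ h, Summable (‖b h ·‖)) (hC : ∀ h, ∑' k, ‖b h k‖ ≤ C) :
    ∑' g, ‖∑' h, a h * b h (h⁻¹ * g)‖ ≤ (∑' h, ‖a h‖) * C := by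
  set F : Γ → Γ → ℝ := fun h g => ‖a h‖ * ‖b h (h⁻¹ * g)‖
  have hF : Summable (Function.uncurry F) := summable_norm_mul_translate ha hb hC
  have hpointwise : ∀ g, ‖∑' h, a h * b h (h⁻¹ * g)‖ ≤ ∑' h, F h g := fun g =>
    tsum_of_norm_bounded (hF.prod_symm.prod_factor g).hasSum fun _ => norm_mul_le _ _
  have hcolumns : Summable fun g => ∑' h, F h g := hF.prod_symm.prod
  calc ∑' g, ‖∑' h, a h * b h (h⁻¹ * g)‖
      ≤ ∑' g, ∑' h, F h g :=
        (hcolumns.of_nonneg_of_le (fun _ => norm_nonneg _) hpointwise).tsum_le_tsum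
          hpointwise hcolumns
    _ = ∑' h, ‖a h‖ * ∑' k, ‖b h k‖ := by
        rw [hF.tsum_comm]
        exact tsum_congr fun h => tsum_const_mul_translate_eq ‖a h‖ (‖b h ·‖) h
    _ ≤ ∑' h, ‖a h‖ * C :=
        Summable.tsum_le_tsum (fun h => mul_le_mul_of_nonneg_left (hC h) (norm_nonneg _))
          (hF.prod.congr fun h => tsum_const_mul_translate_eq ‖a h‖ (‖b h ·‖) h) (ha.mul_right C)
    _ = (∑' h, ‖a h‖) * C := tsum_mul_right

end TwistedConvolution

theorem A0_conv_norm_le_general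
    {Γ X : Type*} [Group Γ] [TopologicalSpace X]
    [MulAction Γ X]
    (f₁ f₂ : Γ → C(X, ℂ))
    (h₁s : ∀ x : X, Summable fun g => ‖f₁ g x‖)
    (h₂s : ∀ x : X, Summable fun g => ‖f₂ g x‖)
    (h₁b : BddAbove (Set.range fun x : X => ∑' g, ‖f₁ g x‖))
    (h₂b : BddAbove (Set.range fun x : X => ∑' g, ‖f₂ g x‖)) :
    (⨆ x : X, ∑' g : Γ,
        ‖∑' h : Γ, f₁ h x * f₂ (h⁻¹ * g) (h⁻¹ • x)‖) ≤
      (⨆ x : X, ∑' g : Γ, ‖f₁ g x‖) *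
        (⨆ x : X, ∑' g : Γ, ‖f₂ g x‖) := by
  have hnorm₂_nonneg : 0 ≤ ⨆ x : X, ∑' g : Γ, ‖f₂ g x‖ :=
    Real.iSup_nonneg fun _ => tsum_nonneg fun _ => norm_nonneg _
  refine Real.iSup_le (fun x => ?_) (mul_nonneg
    (Real.iSup_nonneg fun _ => tsum_nonneg fun _ => norm_nonneg _) hnorm₂_nonneg)
  calc ∑' g, ‖∑' h, f₁ h x * f₂ (h⁻¹ * g) (h⁻¹ • x)‖
      ≤ (∑' h, ‖f₁ h x‖) * ⨆ y : X, ∑' g : Γ, ‖f₂ g y‖ :=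
        tsum_norm_tsum_mul_translate_le (b := fun h k => f₂ k (h⁻¹ • x))
          (h₁s x) (fun _ => h₂s _) (fun _ => le_ciSup h₂b _)
    _ ≤ _ := mul_le_mul_of_nonneg_right (le_ciSup h₁b x) hnorm₂_nonneg

theorem A0_conv_norm_le
    {Γ X : Type*} [Group Γ] [TopologicalSpace X] [CompactSpace X] [T2Space X]
    [MulAction Γ X] [ContinuousConstSMul Γ X]
    (f₁ f₂ : Γ → C(X, ℂ))
    (h₁s : ∀ x : X, Summable fun g => ‖f₁ g x‖)
    (h₂s : ∀ x : X, Summable fun g => ‖f₂ g x‖)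
    (h₁b : BddAbove (Set.range fun x : X => ∑' g, ‖f₁ g x‖))
    (h₂b : BddAbove (Set.range fun x : X => ∑' g, ‖f₂ g x‖)) :
    (⨆ x : X, ∑' g : Γ,
        ‖∑' h : Γ, f₁ h x * f₂ (h⁻¹ * g) (h⁻¹ • x)‖) ≤
      (⨆ x : X, ∑' g : Γ, ‖f₁ g x‖) *
        (⨆ x : X, ∑' g : Γ, ‖f₂ g x‖) :=
  A0_conv_norm_le_general f₁ f₂ h₁s h₂s h₁b h₂b
end

section
/- Let V be a Banach C(X)-module whose action is ℓ¹-geometric, i.e. ∑_{k=1}^n ‖p_k.v‖ ≤ ‖∑_k p_k‖_∞·‖v‖ for all p_k ∈ C(X,[0,1]) and v ∈ V. Then the dual module V* with action (p.φ)(v) = φ(p.v) is ℓ∞-geometric, i.e. ‖∑_{k=1}^n p_k.φ_k‖ ≤ ‖∑_k p_k‖_∞·max_k ‖φ_k‖ for all p_k ∈ C(X,[0,1]) and φ_k ∈ V*. -/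
variable {X V : Type*} [TopologicalSpace X] [CompactSpace X] [T2Space X]
  [NormedAddCommGroup V] [NormedSpace ℂ V] [Module C(X, ℂ) V]
  [SMulCommClass ℂ C(X, ℂ) V]

/-- The (continuous linear) action of p ∈ C(X) on a contractive Banach
C(X)-module V. -/
noncomputable def smulCLM
    (hcontr : ∀ (q : C(X, ℂ)) (v : V), ‖q • v‖ ≤ ‖q‖ * ‖v‖)
    (p : C(X, ℂ)) : V →L[ℂ] V :=
  LinearMap.mkContinuous
    { toFun := fun v => p • v
      map_add' := fun v w => smul_add p v w
      map_smul' := fun c v => by simpa using (smul_comm c p v).symm }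
    ‖p‖ (fun v => hcontr p v)

/-- p takes values in [0,1]. -/
def InUnitInterval (p : C(X, ℂ)) : Prop :=
  ∀ x : X, ∃ t : ℝ, 0 ≤ t ∧ t ≤ 1 ∧ p x = t

/- STATEMENT 1: if the contractive C(X)-action on V is ℓ¹-geometric, then the
dual action on V* = V →L[ℂ] ℂ, (p.φ)(v) = φ(p.v), is ℓ∞-geometric. -/
theorem dual_of_l1_geometric_is_linfty_geometric
    (hcontr : ∀ (q : C(X, ℂ)) (v : V), ‖q • v‖ ≤ ‖q‖ * ‖v‖)
    (hl1 : ∀ (n : ℕ) (p : Fin n → C(X, ℂ)), (∀ k, InUnitInterval (p k)) →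
      ∀ v : V, ∑ k, ‖p k • v‖ ≤ ‖∑ k, p k‖ * ‖v‖) :
    ∀ (n : ℕ) (p : Fin n → C(X, ℂ)), (∀ k, InUnitInterval (p k)) →
      ∀ φ : Fin n → (V →L[ℂ] ℂ),
        ‖∑ k, (φ k).comp (smulCLM hcontr (p k))‖ ≤
          ‖∑ k, p k‖ * ⨆ k, ‖φ k‖ := by
  intro n p hp φ
  have hsup : 0 ≤ ⨆ k, ‖φ k‖ := Real.iSup_nonneg fun k => norm_nonneg _
  apply ContinuousLinearMap.opNorm_le_bound _ (by positivity)
  intro v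
  calc ‖(∑ k, (φ k).comp (smulCLM hcontr (p k))) v‖
      = ‖∑ k, φ k (p k • v)‖ := by
        simp [ContinuousLinearMap.sum_apply, smulCLM, LinearMap.mkContinuous_apply]
    _ ≤ ∑ k, ‖φ k (p k • v)‖ := norm_sum_le _ _
    _ ≤ ∑ k, (⨆ j, ‖φ j‖) * ‖p k • v‖ :=
        Finset.sum_le_sum fun k _ =>
          le_trans ((φ k).le_opNorm _)
            (mul_le_mul_of_nonneg_right
              (le_ciSup (f := fun j => ‖φ j‖) (Set.Finite.bddAbove (Set.finite_range _)) k) (norm_nonneg _))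
    _ = (⨆ j, ‖φ j‖) * ∑ k, ‖p k • v‖ := (Finset.mul_sum _ _ _).symm
    _ ≤ (⨆ j, ‖φ j‖) * (‖∑ k, p k‖ * ‖v‖) :=
        mul_le_mul_of_nonneg_left (hl1 n p hp v) hsup
    _ = ‖∑ k, p k‖ * (⨆ k, ‖φ k‖) * ‖v‖ := by ring
end

section
/- Let V be a Banach C(X)-module whose action is ℓ∞-geometric. Then the dual module V* is ℓ¹-geometric. -/
variable {X V : Type*} [TopologicalSpace X] [CompactSpace X] [T2Space X]
  [NormedAddCommGroup V] [NormedSpace ℂ V] [Module C(X, ℂ) V]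
  [SMulCommClass ℂ C(X, ℂ) V]

/- STATEMENT 2: if the contractive C(X)-action on V is ℓ∞-geometric, then the
dual action on V* = V →L[ℂ] ℂ, (p.φ)(v) = φ(p.v), is ℓ¹-geometric. -/
theorem dual_of_linfty_geometric_is_l1_geometric
    (hcontr : ∀ (q : C(X, ℂ)) (v : V), ‖q • v‖ ≤ ‖q‖ * ‖v‖)
    (hlinfty : ∀ (n : ℕ) (p : Fin n → C(X, ℂ)), (∀ k, InUnitInterval (p k)) →
      ∀ v : Fin n → V, ‖∑ k, p k • v k‖ ≤ ‖∑ k, p k‖ * ⨆ k, ‖v k‖) :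
    ∀ (n : ℕ) (p : Fin n → C(X, ℂ)), (∀ k, InUnitInterval (p k)) →
      ∀ φ : V →L[ℂ] ℂ,
        ∑ k, ‖φ.comp (smulCLM hcontr (p k))‖ ≤ ‖∑ k, p k‖ * ‖φ‖ := by
  intro n p hp φ
  rcases Nat.eq_zero_or_pos n with hn | hn
  · subst hn; simp
  have : Nonempty (Fin n) := ⟨⟨0, hn⟩⟩
  refine le_of_forall_pos_le_add ?_
  intro ε hε
  set T : Fin n → (V →L[ℂ] ℂ) := fun k => φ.comp (smulCLM hcontr (p k)) with hT
  have hnpos : (0 : ℝ) < n := by exact_mod_cast hn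
  set ε' : ℝ := ε / n with hε'def
  have hε'pos : 0 < ε' := div_pos hε hnpos
  -- choose near-optimal vectors
  have hchoice : ∀ k : Fin n, ∃ v : V, ‖v‖ ≤ 1 ∧ ‖T k‖ ≤ ‖(T k) v‖ + ε' := by
    intro k
    by_cases h : ‖T k‖ ≤ ε'
    · exact ⟨0, by simp, by simpa using h⟩
    · obtain ⟨v, hv1, hv2⟩ := (T k).exists_lt_apply_of_lt_opNorm
        (r := ‖T k‖ - ε') (by linarith [not_le.mp h])
      exact ⟨v, hv1.le, by linarith⟩
  choose v hv1 hv2 using hchoice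
  -- rotate so that the pairings are nonnegative reals
  set a : Fin n → ℂ := fun k => (T k) (v k) with ha
  set c : Fin n → ℂ := fun k => if a k = 0 then 1 else (‖a k‖ : ℂ) / a k with hc
  have hcnorm : ∀ k, ‖c k‖ = 1 := by
    intro k
    simp only [hc]
    split_ifs with h
    · simp
    · rw [norm_div, Complex.norm_real, norm_norm, div_self (norm_ne_zero_iff.mpr h)]
  have hca : ∀ k, c k * a k = (‖a k‖ : ℂ) := by
    intro k
    simp only [hc]
    split_ifs with h
    · simp [h]
    · field_simp
  set w : Fin n → V := fun k => c k • v k with hw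
  have hwnorm : ∀ k, ‖w k‖ ≤ 1 := by
    intro k
    rw [hw]
    simpa [norm_smul, hcnorm k] using hv1 k
  -- key computation
  have hphi : φ (∑ k, p k • w k) = ((∑ k, ‖a k‖ : ℝ) : ℂ) := by
    rw [map_sum]
    push_cast
    refine Finset.sum_congr rfl fun k _ => ?_
    have : p k • w k = c k • (p k • v k) := (smul_comm (c k) (p k) (v k)).symm
    rw [this, map_smul, smul_eq_mul]
    exact hca k
  have hsum_a : ∑ k, ‖a k‖ ≤ ‖∑ k, p k‖ * ‖φ‖ := by
    have h1 : ∑ k, ‖a k‖ = ‖φ (∑ k, p k • w k)‖ := by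
      rw [hphi, Complex.norm_real, Real.norm_of_nonneg
        (Finset.sum_nonneg fun k _ => norm_nonneg _)]
    have h2 : ‖φ (∑ k, p k • w k)‖ ≤ ‖φ‖ * ‖∑ k, p k • w k‖ := φ.le_opNorm _
    have h3 : ‖∑ k, p k • w k‖ ≤ ‖∑ k, p k‖ * ⨆ k, ‖w k‖ := hlinfty n p hp w
    have h4 : (⨆ k, ‖w k‖) ≤ 1 := ciSup_le hwnorm
    have h5 : ‖∑ k, p k‖ * (⨆ k, ‖w k‖) ≤ ‖∑ k, p k‖ * 1 :=
      mul_le_mul_of_nonneg_left h4 (norm_nonneg _)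
    calc ∑ k, ‖a k‖ = ‖φ (∑ k, p k • w k)‖ := h1
      _ ≤ ‖φ‖ * ‖∑ k, p k • w k‖ := h2
      _ ≤ ‖φ‖ * (‖∑ k, p k‖ * 1) :=
          mul_le_mul_of_nonneg_left (h3.trans h5) (norm_nonneg _)
      _ = ‖∑ k, p k‖ * ‖φ‖ := by ring
  calc ∑ k, ‖T k‖ ≤ ∑ k, (‖a k‖ + ε') := Finset.sum_le_sum fun k _ => hv2 k
    _ = (∑ k, ‖a k‖) + n * ε' := by
        rw [Finset.sum_add_distrib, Finset.sum_const, Finset.card_univ,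
          Fintype.card_fin, nsmul_eq_mul]
    _ = (∑ k, ‖a k‖) + ε := by
        rw [hε'def, mul_div_cancel₀ _ (ne_of_gt hnpos)]
    _ ≤ ‖∑ k, p k‖ * ‖φ‖ + ε := by linarith
end

section
/- Let V be an ℓ¹-geometric Banach C(X)-module and W any Banach space. Then the projective tensor product V ⊗_π W, with C(X)-action p.(v⊗w) = (p.v)⊗w, is again an ℓ¹-geometric C(X)-module. -/
open scoped TensorProduct

variable {X V W : Type*} [TopologicalSpace X] [CompactSpace X] [T2Space X]
  [NormedAddCommGroup V] [NormedSpace ℂ V] [Module C(X, ℂ) V]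
  [SMulCommClass ℂ C(X, ℂ) V]
  [NormedAddCommGroup W] [NormedSpace ℂ W]

/-- The projective tensor norm on V ⊗ W:
‖z‖_π = inf {∑ᵢ ‖vᵢ‖·‖wᵢ‖ : z = ∑ᵢ vᵢ ⊗ wᵢ}. -/
noncomputable def projNorm (z : V ⊗[ℂ] W) : ℝ :=
  sInf {r : ℝ | ∃ (n : ℕ) (v : Fin n → V) (w : Fin n → W),
    z = ∑ i, v i ⊗ₜ[ℂ] w i ∧ r = ∑ i, ‖v i‖ * ‖w i‖}

lemma projNorm_set_bddBelow (z : V ⊗[ℂ] W) :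
    BddBelow {r : ℝ | ∃ (n : ℕ) (v : Fin n → V) (w : Fin n → W),
      z = ∑ i, v i ⊗ₜ[ℂ] w i ∧ r = ∑ i, ‖v i‖ * ‖w i‖} := by
  refine ⟨0, ?_⟩
  rintro r ⟨n, v, w, -, rfl⟩
  exact Finset.sum_nonneg fun i _ => mul_nonneg (norm_nonneg _) (norm_nonneg _)

lemma projNorm_set_nonempty (z : V ⊗[ℂ] W) :
    Set.Nonempty {r : ℝ | ∃ (n : ℕ) (v : Fin n → V) (w : Fin n → W),
      z = ∑ i, v i ⊗ₜ[ℂ] w i ∧ r = ∑ i, ‖v i‖ * ‖w i‖} := by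
  suffices h : ∃ (n : ℕ) (v : Fin n → V) (w : Fin n → W), z = ∑ i, v i ⊗ₜ[ℂ] w i by
    obtain ⟨n, v, w, h⟩ := h
    exact ⟨_, n, v, w, h, rfl⟩
  induction z using TensorProduct.induction_on with
  | zero => exact ⟨0, ![], ![], by simp⟩
  | tmul v w => exact ⟨1, ![v], ![w], by simp⟩
  | add x y hx hy =>
    obtain ⟨n, v, w, rfl⟩ := hx
    obtain ⟨m, v', w', rfl⟩ := hy
    exact ⟨n + m, Fin.append v v', Fin.append w w', by
      rw [Fin.sum_univ_add]; simp [Fin.append_left, Fin.append_right]⟩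

lemma projNorm_le_rep (z : V ⊗[ℂ] W) {n : ℕ} (v : Fin n → V) (w : Fin n → W)
    (h : z = ∑ i, v i ⊗ₜ[ℂ] w i) : projNorm z ≤ ∑ i, ‖v i‖ * ‖w i‖ :=
  csInf_le (projNorm_set_bddBelow z) ⟨n, v, w, h, rfl⟩

theorem projective_tensor_l1_geometric
    (hcontr : ∀ (q : C(X, ℂ)) (v : V), ‖q • v‖ ≤ ‖q‖ * ‖v‖)
    (hl1 : ∀ (n : ℕ) (p : Fin n → C(X, ℂ)), (∀ k, InUnitInterval (p k)) →
      ∀ v : V, ∑ k, ‖p k • v‖ ≤ ‖∑ k, p k‖ * ‖v‖) :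
    ∀ (n : ℕ) (p : Fin n → C(X, ℂ)), (∀ k, InUnitInterval (p k)) →
      ∀ z : V ⊗[ℂ] W,
        ∑ k, projNorm (p k • z) ≤ ‖∑ k, p k‖ * projNorm z := by
  intro n p hp z
  set c := ‖∑ k, p k‖ with hc
  have hc0 : 0 ≤ c := norm_nonneg _
  have main : ∀ (m : ℕ) (v : Fin m → V) (w : Fin m → W), z = ∑ i, v i ⊗ₜ[ℂ] w i →
      ∑ k, projNorm (p k • z) ≤ c * ∑ i, ‖v i‖ * ‖w i‖ := by
    intro m v w hz
    have hrep : ∀ k, p k • z = ∑ i, (p k • v i) ⊗ₜ[ℂ] w i := by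
      intro k
      rw [hz, Finset.smul_sum]
      simp [TensorProduct.smul_tmul']
    calc ∑ k, projNorm (p k • z) ≤ ∑ k, ∑ i, ‖p k • v i‖ * ‖w i‖ :=
          Finset.sum_le_sum fun k _ => projNorm_le_rep _ _ _ (hrep k)
      _ = ∑ i, (∑ k, ‖p k • v i‖) * ‖w i‖ := by
          rw [Finset.sum_comm]
          simp [Finset.sum_mul]
      _ ≤ ∑ i, (c * ‖v i‖) * ‖w i‖ :=
          Finset.sum_le_sum fun i _ =>
            mul_le_mul_of_nonneg_right (hl1 n p hp (v i)) (norm_nonneg _)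
      _ = c * ∑ i, ‖v i‖ * ‖w i‖ := by
          rw [Finset.mul_sum]
          exact Finset.sum_congr rfl fun i _ => by ring
  refine le_of_forall_pos_le_add ?_
  intro ε hε
  have hε' : 0 < ε / (c + 1) := by positivity
  obtain ⟨r, hr, hrlt⟩ := Real.lt_sInf_add_pos (projNorm_set_nonempty z) hε'
  obtain ⟨m, v, w, hz, rfl⟩ := hr
  have h1 : ∑ k, projNorm (p k • z) ≤ c * ∑ i, ‖v i‖ * ‖w i‖ := main m v w hz
  have h2 : c * ∑ i, ‖v i‖ * ‖w i‖ ≤ c * (projNorm z + ε / (c + 1)) :=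
    mul_le_mul_of_nonneg_left hrlt.le hc0
  have h3 : c * (projNorm z + ε / (c + 1)) ≤ c * projNorm z + ε := by
    rw [mul_add]
    have : c * (ε / (c + 1)) ≤ ε := by
      rw [mul_div_assoc']
      rw [div_le_iff₀ (by linarith)]
      nlinarith
    linarith
  linarith
end

section
/- Let V be an ℓ∞-geometric Banach C(X)-module and W any Banach space. Then the injective tensor product V ⊗_ε W, with C(X)-action p.(v⊗w) = (p.v)⊗w, is again an ℓ∞-geometric C(X)-module. -/
open scoped TensorProduct

variable {X V W : Type*} [TopologicalSpace X] [CompactSpace X] [T2Space X]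
  [NormedAddCommGroup V] [NormedSpace ℂ V] [Module C(X, ℂ) V]
  [SMulCommClass ℂ C(X, ℂ) V]
  [NormedAddCommGroup W] [NormedSpace ℂ W]

/-- The contraction (id ⊗ w*) : V ⊗ W → V, v ⊗ w ↦ w*(w)·v. -/
noncomputable def epsContract (ψ : W →L[ℂ] ℂ) : V ⊗[ℂ] W →ₗ[ℂ] V :=
  TensorProduct.lift
    { toFun := fun v => LinearMap.smulRight ψ.toLinearMap v
      map_add' := fun v₁ v₂ => by ext w; simp [smul_add]
      map_smul' := fun c v => by
        ext w
        simp only [LinearMap.smulRight_apply, RingHom.id_apply,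
          LinearMap.smul_apply, ContinuousLinearMap.coe_coe]
        exact smul_comm _ c v }

/-- The injective tensor norm on V ⊗ W:
‖z‖_ε = sup {‖(id ⊗ w*)(z)‖ : w* ∈ W*, ‖w*‖ = 1}. -/
noncomputable def injNorm (z : V ⊗[ℂ] W) : ℝ :=
  ⨆ ψ : {ψ : W →L[ℂ] ℂ // ‖ψ‖ = 1}, ‖epsContract (V := V) ψ.1 z‖


lemma epsContract_tmul (ψ : W →L[ℂ] ℂ) (v : V) (w : W) :
    epsContract (V := V) ψ (v ⊗ₜ[ℂ] w) = ψ w • v := by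
  simp [epsContract]

lemma epsContract_csmul (ψ : W →L[ℂ] ℂ) (p : C(X, ℂ)) (z : V ⊗[ℂ] W) :
    epsContract (V := V) ψ (p • z) = p • epsContract (V := V) ψ z := by
  induction z using TensorProduct.induction_on with
  | zero => simp
  | tmul v w =>
      rw [TensorProduct.smul_tmul', epsContract_tmul, epsContract_tmul]
      exact smul_comm _ _ _
  | add a b ha hb => rw [smul_add, map_add, ha, hb, map_add, smul_add]

lemma epsContract_bound (z : V ⊗[ℂ] W) :
    ∃ C : ℝ, ∀ ψ : W →L[ℂ] ℂ, ‖ψ‖ = 1 → ‖epsContract (V := V) ψ z‖ ≤ C := by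
  induction z using TensorProduct.induction_on with
  | zero => exact ⟨0, fun ψ _ => by simp⟩
  | tmul v w =>
      refine ⟨‖w‖ * ‖v‖, fun ψ hψ => ?_⟩
      rw [epsContract_tmul, norm_smul]
      have := ψ.le_opNorm w
      rw [hψ, one_mul] at this
      exact mul_le_mul_of_nonneg_right this (norm_nonneg v)
  | add a b ha hb =>
      obtain ⟨C1, h1⟩ := ha
      obtain ⟨C2, h2⟩ := hb
      refine ⟨C1 + C2, fun ψ hψ => ?_⟩
      rw [map_add]
      exact (norm_add_le _ _).trans (add_le_add (h1 ψ hψ) (h2 ψ hψ))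

lemma injNorm_nonneg (z : V ⊗[ℂ] W) : 0 ≤ injNorm z :=
  Real.iSup_nonneg fun _ => norm_nonneg _

lemma norm_epsContract_le_injNorm (ψ : {ψ : W →L[ℂ] ℂ // ‖ψ‖ = 1})
    (z : V ⊗[ℂ] W) : ‖epsContract (V := V) ψ.1 z‖ ≤ injNorm z := by
  obtain ⟨C, hC⟩ := epsContract_bound (V := V) z
  exact le_ciSup (f := fun φ : {ψ : W →L[ℂ] ℂ // ‖ψ‖ = 1} =>
    ‖epsContract (V := V) φ.1 z‖)
    ⟨C, Set.forall_mem_range.mpr fun φ => hC φ.1 φ.2⟩ ψ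

/- STATEMENT 4: if V is an ℓ∞-geometric Banach C(X)-module and W a Banach
space, then V ⊗_ε W with the action p.(v ⊗ w) = (p.v) ⊗ w is again
ℓ∞-geometric. -/
theorem injective_tensor_linfty_geometric
    (hcontr : ∀ (q : C(X, ℂ)) (v : V), ‖q • v‖ ≤ ‖q‖ * ‖v‖)
    (hlinfty : ∀ (n : ℕ) (p : Fin n → C(X, ℂ)), (∀ k, InUnitInterval (p k)) →
      ∀ v : Fin n → V, ‖∑ k, p k • v k‖ ≤ ‖∑ k, p k‖ * ⨆ k, ‖v k‖) :
    ∀ (n : ℕ) (p : Fin n → C(X, ℂ)), (∀ k, InUnitInterval (p k)) →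
      ∀ z : Fin n → V ⊗[ℂ] W,
        injNorm (∑ k, p k • z k) ≤ ‖∑ k, p k‖ * ⨆ k, injNorm (z k) := by
  intro n p hp z
  have hrhs : 0 ≤ ‖∑ k, p k‖ * ⨆ k, injNorm (z k) :=
    mul_nonneg (norm_nonneg _) (Real.iSup_nonneg fun k => injNorm_nonneg _)
  refine Real.iSup_le (fun ψ => ?_) hrhs
  have heq : epsContract (V := V) ψ.1 (∑ k, p k • z k)
      = ∑ k, p k • epsContract (V := V) ψ.1 (z k) := by
    rw [map_sum]
    exact Finset.sum_congr rfl fun k _ => epsContract_csmul _ _ _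
  rw [heq]
  refine (hlinfty n p hp _).trans ?_
  refine mul_le_mul_of_nonneg_left ?_ (norm_nonneg _)
  refine Real.iSup_le (fun k => ?_)
    (Real.iSup_nonneg fun k => injNorm_nonneg _)
  exact (norm_epsContract_le_injNorm ψ (z k)).trans
    (le_ciSup (f := fun k => injNorm (z k))
      (Set.Finite.bddAbove (Set.finite_range _)) k)
end

section
/- Let E* be a dual Banach A₀(Γ,X)-bimodule, D: A₀(Γ,X) → E* a bounded derivation which is left C(X)-equivariant (D(p*f) = p.D(f) for all p ∈ C(X), f ∈ A₀). Then for every g ∈ Γ and p ∈ C(X), the element c_g := −D(δ_g).δ_{g⁻¹} ∈ E* is C(X)-central: p.(D(δ_g).δ_{g⁻¹}) = (D(δ_g).δ_{g⁻¹}).p. -/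
/- STATEMENT 19: Let A be (a Banach algebra containing the data of) A₀(Γ,X):
a unital Banach algebra with a group homomorphism δ : Γ → Aˣ-part and a unital
algebra embedding emb : C(X) → A satisfying δ_g·emb(p)·δ_{g⁻¹} = emb(p^g).
Let E* be a dual Banach A-A-bimodule (actions l, r on E, with dual actions
(a.φ)(v) = φ(r a v), (φ.a)(v) = φ(l a v)), and let D : A → E* be a bounded
derivation which is left C(X)-equivariant: D(emb p · a) = p.D(a). Then for
every g ∈ Γ and p ∈ C(X), the element D(δ_g).δ_{g⁻¹} ∈ E* is C(X)-central:
p.(D(δ_g).δ_{g⁻¹}) = (D(δ_g).δ_{g⁻¹}).p. -/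
theorem derivation_image_CX_central
    {Γ X A : Type*} [Group Γ] [TopologicalSpace X] [CompactSpace X] [T2Space X]
    [MulAction Γ X] [ContinuousConstSMul Γ X]
    [NormedRing A] [NormedAlgebra ℂ A]
    (δ : Γ →* A) (emb : C(X, ℂ) →ₐ[ℂ] A)
    (hcov : ∀ (g : Γ) (p : C(X, ℂ)),
      δ g * emb p * δ g⁻¹
        = emb (p.comp ⟨fun x => g⁻¹ • x, continuous_const_smul g⁻¹⟩))
    (E : Type*) [NormedAddCommGroup E] [NormedSpace ℂ E]
    (l r : A → E →L[ℂ] E)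
    (hladd : ∀ a b : A, l (a + b) = l a + l b)
    (hlsmul : ∀ (c : ℂ) (a : A), l (c • a) = c • l a)
    (hradd : ∀ a b : A, r (a + b) = r a + r b)
    (hrsmul : ∀ (c : ℂ) (a : A), r (c • a) = c • r a)
    (hlmul : ∀ a b : A, l (a * b) = (l a).comp (l b))
    (hrmul : ∀ a b : A, r (a * b) = (r b).comp (r a))
    (hlr : ∀ a b : A, (l a).comp (r b) = (r b).comp (l a))
    (hl1 : l 1 = ContinuousLinearMap.id ℂ E)
    (hr1 : r 1 = ContinuousLinearMap.id ℂ E)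
    (hlbdd : ∀ (a : A) (v : E), ‖l a v‖ ≤ ‖a‖ * ‖v‖)
    (hrbdd : ∀ (a : A) (v : E), ‖r a v‖ ≤ ‖a‖ * ‖v‖)
    (D : A →L[ℂ] (E →L[ℂ] ℂ))
    (hD : ∀ (a b : A) (v : E), D (a * b) v = D b (r a v) + D a (l b v))
    (hDequiv : ∀ (p : C(X, ℂ)) (a : A) (v : E),
      D (emb p * a) v = D a (r (emb p) v)) :
    ∀ (g : Γ) (p : C(X, ℂ)) (v : E),
      D (δ g) (l (δ g⁻¹) (r (emb p) v))
        = D (δ g) (l (δ g⁻¹) (l (emb p) v)) := by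
  intro g p v
  -- D 1 = 0
  have hD1 : ∀ w : E, D 1 w = 0 := by
    intro w
    have h := hD 1 1 w
    simp [hl1, hr1] at h
    exact h
  -- D (emb q) = 0 for all q
  have hDemb : ∀ (q : C(X, ℂ)) (w : E), D (emb q) w = 0 := by
    intro q w
    have h := hDequiv q 1 w
    rw [mul_one] at h
    rw [h, hD1]
  set q : C(X, ℂ) := p.comp ⟨fun x => g • x, continuous_const_smul g⟩ with hqdef
  have hq1 : δ g * emb q * δ g⁻¹ = emb p := by
    rw [hcov g q]
    congr 1
    ext x
    simp [hqdef, ContinuousMap.comp, smul_smul]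
  have hq2 : δ g⁻¹ * emb p * δ g = emb q := by
    have h := hcov g⁻¹ p
    rw [inv_inv] at h
    exact h
  have hδ1 : δ g⁻¹ * δ g = 1 := by rw [← map_mul, inv_mul_cancel, map_one]
  have hδ2 : δ g * δ g⁻¹ = 1 := by rw [← map_mul, mul_inv_cancel, map_one]
  have hswap1 : emb p * δ g = δ g * emb q := by
    calc emb p * δ g = (δ g * emb q * δ g⁻¹) * δ g := by rw [hq1]
    _ = δ g * emb q * (δ g⁻¹ * δ g) := by rw [mul_assoc]
    _ = δ g * emb q := by rw [hδ1, mul_one]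
  have hswap2 : emb q * δ g⁻¹ = δ g⁻¹ * emb p := by
    calc emb q * δ g⁻¹ = (δ g⁻¹ * emb p * δ g) * δ g⁻¹ := by rw [hq2]
    _ = δ g⁻¹ * emb p * (δ g * δ g⁻¹) := by rw [mul_assoc]
    _ = δ g⁻¹ * emb p := by rw [hδ2, mul_one]
  -- key identity: D(δ g)(r(emb p) w) = D(δ g)(l(emb q) w)
  have key : ∀ w : E, D (δ g) (r (emb p) w) = D (δ g) (l (emb q) w) := by
    intro w
    have h1 := hDequiv p (δ g) w
    have h2 := hD (δ g) (emb q) w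
    rw [← hswap1] at h2
    rw [h1, hDemb, zero_add] at h2
    exact h2
  have h3 := key (l (δ g⁻¹) v)
  have hcomm : r (emb p) (l (δ g⁻¹) v) = l (δ g⁻¹) (r (emb p) v) := by
    have := congrArg (fun f => f v) (hlr (δ g⁻¹) (emb p))
    simpa using this.symm
  rw [hcomm] at h3
  have h4 : l (emb q) (l (δ g⁻¹) v) = l (δ g⁻¹) (l (emb p) v) := by
    have e1 := congrArg (fun f => f v) (hlmul (emb q) (δ g⁻¹))
    have e2 := congrArg (fun f => f v) (hlmul (δ g⁻¹) (emb p))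
    simp only [ContinuousLinearMap.comp_apply] at e1 e2
    rw [← e1, ← e2, hswap2]
  rw [h4] at h3
  exact h3
end
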